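/- Fix an integer D ≥ 2 and let λ_D(t) = ((D·r(t)² + r(2t))² − 4·r(t)²)/((D+3)(D²−1)). Then λ_D(t) → 0 as t → +∞, and consequently the channel coefficients satisfy α_D(t) = (1/(D+1) − λ_D(t))⁻¹ → D+1 and β_D(t) = (1/(D+1) + D·λ_D(t))⁻¹ → D+1 as t → +∞. (In the long-time limit the Hamiltonian-driven channel converges to the unitary 2-design channel.) -/

import Mathlib

/-!
Poisson's integral `r t = (2/π) ∫_{-1}^{1} cos (2 t x) √(1 - x²) dx` is checked
coefficientwise: expanding the cosine, the `k`-th moment of `√(1 - x²)` becomes a Wallis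
integral after `x = sin θ`. By the Riemann–Lebesgue lemma `r t → 0`, hence `λ_D t → 0`, and
the channel coefficients tend to `(1 / (D + 1))⁻¹ = D + 1`.
-/

open Real Filter Topology

/-- `r t = ∑_{k=0}^∞ (−1)^k t^{2k}/(k!·(k+1)!) = J₁(2t)/t`. -/
noncomputable def besselR (t : ℝ) : ℝ :=
  ∑' k : ℕ, (-1) ^ k * t ^ (2 * k) / (k.factorial * (k + 1).factorial)

/-- `λ_D(t) = ((D·r(t)² + r(2t))² − 4·r(t)²)/((D+3)(D²−1))` for real parameter `D`. -/
noncomputable def lamD (D t : ℝ) : ℝ :=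
  ((D * besselR t ^ 2 + besselR (2 * t)) ^ 2 - 4 * besselR t ^ 2) / ((D + 3) * (D ^ 2 - 1))

open MeasureTheory intervalIntegral
open scoped Nat FourierTransform

theorem Integrable.tendsto_integral_cos_mul_atTop {g : ℝ → ℝ} (hg : Integrable g) :
    Tendsto (fun t => ∫ x, cos (t * x) * g x) atTop (𝓝 0) := by
  -- `∫ cos (t x) g x` is the real part of the Fourier transform of `g` at `t / (2π)`
  have hRL := (Complex.continuous_re.tendsto 0).comp
    (Real.tendsto_integral_exp_smul_cocompact fun v => (g v : ℂ))
  have hscale : Tendsto (fun t : ℝ => t / (2 * π)) atTop (cocompact ℝ) :=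
    (tendsto_id.atTop_div_const (by positivity)).mono_right atTop_le_cocompact
  refine ((hRL.comp hscale).congr fun t => ?_)
  have hint : Integrable (fun v : ℝ => 𝐞 (-(v * (t / (2 * π)))) • (g v : ℂ)) := by
    simpa [mul_comm] using (Real.fourierIntegral_convergent_iff (t / (2 * π))).2 hg.ofReal
  simp only [Function.comp_apply]
  rw [← RCLike.re_to_complex, ← integral_re hint]
  congr 1 with x
  have harg : 2 * π * -(x * (t / (2 * π))) = -(t * x) := by field_simp
  simp only [Circle.smul_def, Real.fourierChar_apply, RCLike.re_to_complex, smul_eq_mul,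
    harg, Complex.re_mul_ofReal, Complex.exp_ofReal_mul_I_re, cos_neg]

theorem IntervalIntegrable.tendsto_integral_cos_mul_atTop {a b : ℝ} {g : ℝ → ℝ}
    (hg : IntervalIntegrable g volume a b) :
    Tendsto (fun t => ∫ x in a..b, cos (t * x) * g x) atTop (𝓝 0) := by
  have h := (Integrable.tendsto_integral_cos_mul_atTop
    (hg.def'.integrable_indicator measurableSet_uIoc)).const_smul
    (if a ≤ b then (1 : ℝ) else -1)
  simp only [smul_zero] at h
  refine h.congr fun t => ?_
  rw [intervalIntegral_eq_integral_uIoc, ← MeasureTheory.integral_indicator measurableSet_uIoc]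
  simp_rw [Set.indicator_mul_right]

theorem hasSum_integral_cos_mul {a b : ℝ} {g : ℝ → ℝ} (hg : IntervalIntegrable g volume a b)
    (s : ℝ) :
    HasSum (fun k : ℕ => (-1) ^ k * s ^ (2 * k) / (2 * k)! * ∫ x in a..b, x ^ (2 * k) * g x)
      (∫ x in a..b, cos (s * x) * g x) := by
  have hterm (k : ℕ) (x : ℝ) : (-1) ^ k * (s * x) ^ (2 * k) / (2 * k)! * g x =
      (-1) ^ k * s ^ (2 * k) / (2 * k)! * (x ^ (2 * k) * g x) := by ring
  simp_rw [← intervalIntegral.integral_const_mul, ← hterm]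
  refine intervalIntegral.hasSum_integral_of_dominated_convergence
    (fun k x => (|s| * max |a| |b|) ^ (2 * k) / (2 * k)! * |g x|) (fun k => ?_) (fun k => ?_)
    (ae_of_all _ fun x _ => (hasSum_cosh (|s| * max |a| |b|)).summable.mul_right _) ?_
    (ae_of_all _ fun x _ => (hasSum_cos (s * x)).mul_right (g x))
  · exact (Continuous.aestronglyMeasurable (by fun_prop)).mul hg.def'.aestronglyMeasurable
  · refine ae_of_all _ fun x hx => ?_
    have hx : |x| ≤ max |a| |b| := by
      rcases Set.mem_uIcc.1 (Set.uIoc_subset_uIcc hx) with h | h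
      · exact abs_le_max_abs_abs h.1 h.2
      · exact (abs_le_max_abs_abs h.1 h.2).trans_eq (max_comm _ _)
    rw [Real.norm_eq_abs, abs_mul, abs_div, abs_mul, abs_pow, abs_pow, abs_neg, abs_one, one_pow,
      one_mul, Nat.abs_cast, abs_mul]
    gcongr
  · simp_rw [tsum_mul_right, (hasSum_cosh (|s| * max |a| |b|)).tsum_eq]
    exact hg.norm.const_mul _

theorem integral_sin_pow_add_two_neg_pi_div_two (n : ℕ) :
    ∫ x in -(π / 2)..π / 2, sin x ^ (n + 2) =
      (n + 1) / (n + 2) * ∫ x in -(π / 2)..π / 2, sin x ^ n := by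
  simp [integral_sin_pow]

theorem integral_sin_pow_even_neg_pi_div_two (k : ℕ) :
    ∫ x in -(π / 2)..π / 2, sin x ^ (2 * k) = π * (2 * k)! / (4 ^ k * (k ! : ℝ) ^ 2) := by
  induction k with
  | zero => simp
  | succ k ih =>
    rw [mul_add_one, integral_sin_pow_add_two_neg_pi_div_two, ih,
      show 2 * k + 2 = 2 * k + 1 + 1 by ring, Nat.factorial_succ, Nat.factorial_succ,
      Nat.factorial_succ]
    push_cast
    field_simp
    ring

theorem integral_pow_mul_sqrt_one_sub_sq (k : ℕ) :
    ∫ x in (-1 : ℝ)..1, x ^ (2 * k) * √(1 - x ^ 2) =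
      π * (2 * k)! / (2 * 4 ^ k * k ! * (k + 1)!) :=
  calc
    _ = ∫ x in sin (-(π / 2))..sin (π / 2), x ^ (2 * k) * √(1 - x ^ 2) := by
          rw [sin_neg, sin_pi_div_two]
    _ = ∫ x in (-(π / 2))..(π / 2), sin x ^ (2 * k) * √(1 - sin x ^ 2) * cos x :=
          (integral_comp_mul_deriv (fun x _ => hasDerivAt_sin x) continuousOn_cos
            (by fun_prop)).symm
    _ = ∫ x in (-(π / 2))..(π / 2), (sin x ^ (2 * k) - sin x ^ (2 * k + 2)) := by
          refine integral_congr_ae (ae_of_all _ fun x h => ?_)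
          rw [Set.uIoc_of_le (neg_le_self (half_pos pi_pos).le), Set.mem_Ioc] at h
          rw [mul_assoc, ← cos_eq_sqrt_one_sub_sin_sq h.1.le h.2, ← sq, cos_sq']
          ring
    _ = _ := by
          rw [intervalIntegral.integral_sub (by apply Continuous.intervalIntegrable; fun_prop)
              (by apply Continuous.intervalIntegrable; fun_prop),
            integral_sin_pow_add_two_neg_pi_div_two, integral_sin_pow_even_neg_pi_div_two,
            Nat.factorial_succ]
          push_cast
          field_simp
          ring

theorem besselR_eq_integral (t : ℝ) :
    besselR t = 2 / π * ∫ x in (-1 : ℝ)..1, cos (2 * t * x) * √(1 - x ^ 2) := by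
  have hg : IntervalIntegrable (fun x : ℝ => √(1 - x ^ 2)) volume (-1) 1 := by
    apply Continuous.intervalIntegrable; fun_prop
  rw [besselR, ← ((hasSum_integral_cos_mul hg (2 * t)).mul_left (2 / π)).tsum_eq]
  refine tsum_congr fun k => ?_
  have h4 : (4 : ℝ) ^ k = 2 ^ (2 * k) := by rw [pow_mul]; norm_num
  rw [integral_pow_mul_sqrt_one_sub_sq, mul_pow, h4, Nat.factorial_succ]
  push_cast
  field_simp

theorem tendsto_besselR_atTop : Tendsto besselR atTop (𝓝 0) := by
  have hg : IntervalIntegrable (fun x : ℝ => √(1 - x ^ 2)) volume (-1) 1 := by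
    apply Continuous.intervalIntegrable; fun_prop
  simpa [funext besselR_eq_integral] using
    ((hg.tendsto_integral_cos_mul_atTop.comp (tendsto_id.const_mul_atTop two_pos)).const_mul
      (2 / π))

theorem tendsto_lamD_atTop (D : ℝ) : Tendsto (lamD D) atTop (𝓝 0) := by
  have hr := tendsto_besselR_atTop
  have hr2 : Tendsto (fun t => besselR (2 * t)) atTop (𝓝 0) :=
    hr.comp (tendsto_id.const_mul_atTop two_pos)
  have h := ((((hr.pow 2).const_mul D).add hr2).pow 2 |>.sub
    ((hr.pow 2).const_mul 4)).div_const ((D + 3) * (D ^ 2 - 1))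
  simp only [ne_eq, OfNat.ofNat_ne_zero, not_false_eq_true, zero_pow, mul_zero, add_zero,
    sub_self, zero_div] at h
  exact h

/-- In the long-time limit `λ_D(t) → 0`, and the channel coefficients
`α_D(t) = (1/(D+1) − λ_D(t))⁻¹` and `β_D(t) = (1/(D+1) + D·λ_D(t))⁻¹` both
converge to `D+1`: the Hamiltonian-driven channel converges to the
unitary-2-design channel. -/
theorem channel_long_time_limit (D : ℤ) (hD : 2 ≤ D) :
    Tendsto (fun t : ℝ => lamD (D : ℝ) t) atTop (𝓝 0) ∧
    Tendsto (fun t : ℝ => (1 / ((D : ℝ) + 1) - lamD (D : ℝ) t)⁻¹) atTop (𝓝 ((D : ℝ) + 1)) ∧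
    Tendsto (fun t : ℝ => (1 / ((D : ℝ) + 1) + (D : ℝ) * lamD (D : ℝ) t)⁻¹) atTop
      (𝓝 ((D : ℝ) + 1)) := by
  have hl := tendsto_lamD_atTop D
  have hc : 1 / ((D : ℝ) + 1) ≠ 0 := by
    have : (2 : ℝ) ≤ D := by exact_mod_cast hD
    positivity
  refine ⟨hl, ?_, ?_⟩
  · simpa using ((tendsto_const_nhds (x := 1 / ((D : ℝ) + 1))).sub hl).inv₀
      (by rwa [sub_zero])
  · simpa using ((tendsto_const_nhds (x := 1 / ((D : ℝ) + 1))).add (hl.const_mul _)).inv₀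
      (by rwa [mul_zero, add_zero])
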